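/- Let A be a finite-dimensional real commutative associative (not necessarily unital) algebra, and for x ∈ A let L_x denote the multiplication operator L_x(y) = xy. Then the following are equivalent: (i) tr L_x = 0 for every x ∈ A; (ii) L_x is a nilpotent operator for every x ∈ A; (iii) every element x ∈ A is nilpotent, i.e., x^m = 0 for some m ≥ 1. -/

import Mathlib

/-- Powers in an algebra: `x¹ = x`, `x^{k+1} = x·x^k`, i.e. `x^k = L_x^{k-1} x`.
(The value at `k = 0` is junk.) -/
noncomputable def jpow {A : Type*} [AddCommGroup A] [Module ℝ A]
    (mul : A →ₗ[ℝ] A →ₗ[ℝ] A) (x : A) (k : ℕ) : A :=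
  ((mul x) ^ (k - 1)) x

/-!
Associativity alone gives `L_{x^k} = L_x^k`, so (ii) ⇔ (iii) is immediate and (i) says that
`tr (L_x^k) = 0` for all `k ≥ 1`. In characteristic zero vanishing power traces force
nilpotency: over an algebraic closure, `tr f^k = ∑ μ^k · dim V_μ` over the generalized
eigenspaces `V_μ`, and invertibility of the Vandermonde matrix of the distinct eigenvalues
gives `μ · dim V_μ = 0`, so `0` is the only eigenvalue.
-/

open Module

theorem LinearMap.trace_pow_of_isNilpotent_sub_algebraMap {R M : Type*} [CommRing R] [IsReduced R]
    [AddCommGroup M] [Module R M] [Module.Free R M] [Module.Finite R M]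
    {g : Module.End R M} (μ : R) (hg : IsNilpotent (g - algebraMap R _ μ)) (k : ℕ) :
    trace R M (g ^ k) = μ ^ k * finrank R M := by
  induction k with
  | zero => simp
  | succ k ih =>
    rw [pow_succ, Module.End.mul_eq_comp,
      trace_comp_eq_mul_of_commute_of_isNilpotent μ ((Commute.refl g).pow_left k) hg, ih]
    ring

theorem Finset.eq_zero_of_forall_sum_pow_mul_eq_zero {R : Type*} [CommRing R] [IsDomain R]
    {s : Finset R} {w : R → R} (h : ∀ k : ℕ, ∑ μ ∈ s, μ ^ k * w μ = 0) {μ : R} (hμ : μ ∈ s) :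
    w μ = 0 := by
  let e := s.equivFin
  have hv : (fun i => w (e.symm i)) = 0 := by
    refine Matrix.eq_zero_of_forall_pow_sum_mul_pow_eq_zero (f := fun i => (e.symm i : R))
      (fun i j hij => e.symm.injective (Subtype.ext hij)) fun i => ?_
    rw [← h i, ← s.sum_coe_sort, ← e.symm.sum_comp]
    simp only [mul_comm]
  simpa using congrFun hv (e ⟨μ, hμ⟩)

namespace Module.End

variable {K V : Type*} [Field K] [IsAlgClosed K] [AddCommGroup V] [Module K V]
  [FiniteDimensional K V]

theorem trace_pow_eq_sum_finrank_maxGenEigenspace (f : End K V)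
    (hfin : {μ | f.maxGenEigenspace μ ≠ ⊥}.Finite) (k : ℕ) :
    LinearMap.trace K V (f ^ k) =
      ∑ μ ∈ hfin.toFinset, μ ^ k * finrank K (f.maxGenEigenspace μ) := by
  classical
  have hds := DirectSum.isInternal_submodule_of_iSupIndep_of_iSup_eq_top
    f.independent_maxGenEigenspace f.iSup_maxGenEigenspace_eq_top
  have hmaps (k : ℕ) (μ : K) := f.mapsTo_maxGenEigenspace_of_comm ((Commute.refl f).pow_right k) μ
  rw [LinearMap.trace_eq_sum_trace_restrict' hds hfin (hmaps k)]
  refine Finset.sum_congr rfl fun μ _ => ?_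
  have hf : Set.MapsTo f (f.maxGenEigenspace μ) (f.maxGenEigenspace μ) :=
    f.mapsTo_maxGenEigenspace_of_comm rfl μ
  have hnil : IsNilpotent (f.restrict hf - algebraMap K _ μ) := by
    convert f.isNilpotent_restrict_maxGenEigenspace_sub_algebraMap μ using 1
    ext; rfl
  rw [← End.pow_restrict k hf, LinearMap.trace_pow_of_isNilpotent_sub_algebraMap μ hnil]

theorem isNilpotent_of_forall_trace_pow_eq_zero_of_isAlgClosed [CharZero K] (f : End K V)
    (h : ∀ k, LinearMap.trace K V (f ^ (k + 1)) = 0) : IsNilpotent f := by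
  have hfin : {μ | f.maxGenEigenspace μ ≠ ⊥}.Finite :=
    WellFoundedGT.finite_ne_bot_of_iSupIndep f.independent_maxGenEigenspace
  have hzero (μ : K) (hμ : μ ≠ 0) : f.maxGenEigenspace μ = ⊥ := by
    by_contra hne
    have := Finset.eq_zero_of_forall_sum_pow_mul_eq_zero
      (w := fun μ => μ * (finrank K (f.maxGenEigenspace μ) : K)) (fun k => ?_)
      (hfin.mem_toFinset.mpr hne)
    · obtain h0 | h0 := mul_eq_zero.mp this
      exacts [hμ h0, hne (Submodule.finrank_eq_zero.mp (mod_cast h0))]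
    · simp_rw [← h k, trace_pow_eq_sum_finrank_maxGenEigenspace f hfin, pow_succ, mul_assoc]
  have htop : f.maxGenEigenspace 0 = ⊤ := by
    refine top_unique (f.iSup_maxGenEigenspace_eq_top ▸ iSup_le fun μ => ?_)
    rcases eq_or_ne μ 0 with rfl | hμ
    · exact le_rfl
    · exact (hzero μ hμ).trans_le bot_le
  refine (LinearMap.charpoly_nilpotent_tfae f).out 0 2 |>.mpr fun v => ?_
  simpa [htop] using (f.mem_maxGenEigenspace 0 v).mp (htop ▸ Submodule.mem_top)

end Module.End

theorem LinearMap.isNilpotent_of_forall_trace_pow_eq_zero {K V : Type*} [Field K] [CharZero K]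
    [AddCommGroup V] [Module K V] [FiniteDimensional K V] (f : Module.End K V)
    (h : ∀ k, trace K V (f ^ (k + 1)) = 0) : IsNilpotent f := by
  let L := AlgebraicClosure K
  have hinj : Function.Injective (Module.End.baseChangeHom K L V) :=
    LinearMap.baseChangeHom_injective K V L
  rw [← IsNilpotent.map_iff hinj]
  refine Module.End.isNilpotent_of_forall_trace_pow_eq_zero_of_isAlgClosed _ fun k => ?_
  rw [← map_pow]
  exact (trace_baseChange _ L).trans (by rw [h, map_zero])

section jpow

variable {A : Type*} [AddCommGroup A] [Module ℝ A] {mul : A →ₗ[ℝ] A →ₗ[ℝ] A}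

theorem jpow_succ (x : A) (k : ℕ) : jpow mul x (k + 1) = (mul x ^ k) x := rfl

theorem mul_jpow_succ (hassoc : ∀ u v w, mul (mul u v) w = mul u (mul v w)) (x : A) (k : ℕ) :
    mul (jpow mul x (k + 1)) = mul x ^ (k + 1) := by
  induction k with
  | zero => simp [jpow_succ]
  | succ k ih =>
    ext y
    rw [pow_succ', Module.End.mul_apply, ← ih, jpow_succ, jpow_succ, pow_succ',
      Module.End.mul_apply, hassoc]

end jpow

theorem stmt_18_general {A : Type*} [AddCommGroup A] [Module ℝ A] [FiniteDimensional ℝ A]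
    (mul : A →ₗ[ℝ] A →ₗ[ℝ] A)
    (hassoc : ∀ u v w, mul (mul u v) w = mul u (mul v w)) :
    ((∀ x, LinearMap.trace ℝ A (mul x) = 0) ↔ (∀ x, IsNilpotent (mul x))) ∧
    ((∀ x, IsNilpotent (mul x)) ↔ (∀ x : A, ∃ m, 1 ≤ m ∧ jpow mul x m = 0)) := by
  refine ⟨⟨fun htr x => ?_, fun hnil x => ?_⟩, ⟨fun hnil x => ?_, fun hpow x => ?_⟩⟩
  · exact LinearMap.isNilpotent_of_forall_trace_pow_eq_zero _ fun k =>
      mul_jpow_succ hassoc x k ▸ htr _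
  · exact (LinearMap.isNilpotent_trace_of_isNilpotent (hnil x)).eq_zero
  · obtain ⟨n, hn⟩ := hnil x
    exact ⟨n + 1, by omega, by rw [jpow_succ, hn, LinearMap.zero_apply]⟩
  · obtain ⟨m, hm, hm0⟩ := hpow x
    obtain ⟨k, rfl⟩ := Nat.exists_eq_add_of_le' hm
    exact ⟨k + 1, by rw [← mul_jpow_succ hassoc, hm0, map_zero]⟩

/-- for a finite-dimensional real commutative associative algebra `A` the
following are equivalent: (i) `tr L_x = 0` for every `x`; (ii) `L_x` is nilpotent for every
`x`; (iii) every element of `A` is nilpotent. -/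
theorem stmt_18 {A : Type*} [AddCommGroup A] [Module ℝ A] [FiniteDimensional ℝ A]
    (mul : A →ₗ[ℝ] A →ₗ[ℝ] A)
    (hcomm : ∀ u v, mul u v = mul v u)
    (hassoc : ∀ u v w, mul (mul u v) w = mul u (mul v w)) :
    ((∀ x, LinearMap.trace ℝ A (mul x) = 0) ↔ (∀ x, IsNilpotent (mul x))) ∧
    ((∀ x, IsNilpotent (mul x)) ↔ (∀ x : A, ∃ m, 1 ≤ m ∧ jpow mul x m = 0)) :=
  stmt_18_general mul hassoc
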